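/- arXiv:2104.09353 — 2 statements merged into one kernel-verified Lean document; each statement's English description precedes it below -/
import Mathlib

section
/- Let z² ∉ {0,1}, μ a finitely additive measure on the boundary Ω, and f = P_z(μ) its Poisson transform. Then for every directed edge e⃗ pointing away from the base point o, z·f(τ(e⃗)) − f(ι(e⃗)) = (z²−1) z^{d(o,ι(e⃗))} μ(∂₊ e⃗). -/
/-!
In a tree the horocycle bracket can be read off at any level `n ≥ d(o, x)`:
`⟨x, ω⟩ = n - d(x, ω n)`. Let `e⃗ = (u, v)` point away from `o`, with `d(o, v) = m + 1`,
and look at `ω (m + 1)`. If it is `v`, i.e. `ω` lies in `∂₊ e⃗`, the clopen set of rays through `v`,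
then `⟨v, ω⟩ = m + 1` and `⟨u, ω⟩ = m`; otherwise the geodesic from `v` to `ω (m + 1)` passes
through `u`, so `⟨v, ω⟩ = ⟨u, ω⟩ - 1`. Splitting both Poisson integrals along `∂₊ e⃗`, the parts
off `∂₊ e⃗` cancel in `z f(v) - f(u)`, which leaves `(z^(m+2) - z^m) μ(∂₊ e⃗)`.
-/

open SimpleGraph

variable {V : Type*}

/-- The type of directed edges of a graph. -/
def DEdge (G : SimpleGraph V) : Type _ := {p : V × V // G.Adj p.1 p.2}

/-- Initial vertex of a directed edge. -/
def DEdge.ini {G : SimpleGraph V} (e : DEdge G) : V := e.1.1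

/-- Terminal vertex of a directed edge. -/
def DEdge.ter {G : SimpleGraph V} (e : DEdge G) : V := e.1.2

/-- Orientation reversal of a directed edge. -/
def DEdge.op {G : SimpleGraph V} (e : DEdge G) : DEdge G := ⟨(e.1.2, e.1.1), e.2.symm⟩

/-- The sum of an edge function over all directed edges with initial vertex `x`. -/
noncomputable def edgeSum (G : SimpleGraph V) (x : V) (F : DEdge G → ℂ) : ℂ :=
  ∑ᶠ (e : DEdge G) (_ : e.ini = x), F e

/-- The space `L(E⃗)`: edge functions `F` with
`F(e⃗) + F(e⃗^op) = z = Σ_{ι(e⃗')=x} F(e⃗')` for some common `z`. -/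
def memL (G : SimpleGraph V) (F : DEdge G → ℂ) : Prop :=
  ∃ z : ℂ, (∀ e : DEdge G, F e + F e.op = z) ∧ (∀ x : V, edgeSum G x F = z)

/-- A directed edge points away from the base point `o`. -/
def PointsAway (G : SimpleGraph V) (o : V) (e : DEdge G) : Prop :=
  G.dist o e.ter = G.dist o e.ini + 1

/-- The directed edges pointing away from `o`. -/
def DEdgeAway (G : SimpleGraph V) (o : V) : Type _ := {e : DEdge G // PointsAway G o e}

/-- Sum of a function on away-pointing edges over the edges with initial vertex `x`. -/
noncomputable def edgeSumAway (G : SimpleGraph V) (o : V) (x : V)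
    (F : DEdgeAway G o → ℂ) : ℂ :=
  ∑ᶠ (e : DEdgeAway G o) (_ : e.1.ini = x), F e

/-- The space `L(E⃗_o)`: functions on away-pointing edges with
`F(e⃗) = Σ_{ι(e⃗')=τ(e⃗)} F(e⃗')`. -/
def memLAway (G : SimpleGraph V) (o : V) (F : DEdgeAway G o → ℂ) : Prop :=
  ∀ e : DEdgeAway G o, F e = edgeSumAway G o e.1.ter F

/-- The boundary `Ω` of the tree, realized as the set of geodesic rays based at `o`. -/
def Ray (G : SimpleGraph V) (o : V) : Type _ :=
  {r : ℕ → V // r 0 = o ∧ (∀ n, G.Adj (r n) (r (n + 1))) ∧ ∀ n, G.dist o (r n) = n}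

/-- `Ω_o(v)`: the ends whose ray from `o` passes through `v`. -/
def raysThrough (G : SimpleGraph V) (o v : V) : Set (Ray G o) :=
  {ω | ∃ n, ω.1 n = v}

/-- The natural (compact, totally disconnected) topology on the boundary,
generated by the sets `Ω_o(v)`. -/
instance rayTopology (G : SimpleGraph V) (o : V) : TopologicalSpace (Ray G o) :=
  TopologicalSpace.generateFrom {S | ∃ v : V, S = raysThrough G o v}

/-- `∂₊ e⃗`: the set of ends reachable through the directed edge `e⃗`. -/
def dplus (G : SimpleGraph V) (o : V) (e : DEdge G) : Set (Ray G o) :=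
  {ω | ∃ N, ∀ n ≥ N, G.dist e.ter (ω.1 n) + 1 = G.dist e.ini (ω.1 n)}

/-- A finitely additive measure on the clopen subsets of a space. -/
def IsFAMeasure {Z : Type*} [TopologicalSpace Z] (μ : Set Z → ℂ) : Prop :=
  μ ∅ = 0 ∧ ∀ U U' : Set Z, IsClopen U → IsClopen U' →
    μ (U ∪ U') + μ (U ∩ U') = μ U + μ U'

/-- The tree Laplacian: the average of `f` over the neighbors of `x`. -/
noncomputable def lap (G : SimpleGraph V) [G.LocallyFinite] (f : V → ℂ) (x : V) : ℂ :=
  (G.degree x : ℂ)⁻¹ * ∑ y ∈ G.neighborFinset x, f y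

/-- The horocycle bracket `⟨·,·⟩ : X × Ω → ℤ` for base point `o`: the eventual
value of `n - d(x, ω_n)` along the ray `ω`. -/
def IsHorocycleBracket (G : SimpleGraph V) (o : V) (brk : V → Ray G o → ℤ) : Prop :=
  ∀ (x : V) (ω : Ray G o), ∃ N : ℕ, ∀ n : ℕ, n ≥ N → brk x ω = (n : ℤ) - (G.dist x (ω.1 n) : ℤ)

/-- The Poisson transform `P_z(μ)(x) = ∫_Ω z^{⟨x,ω⟩} dμ(ω)`, i.e. the pairing of
`μ` with the locally constant function `ω ↦ z^{⟨x,ω⟩}`. -/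
noncomputable def poisson (G : SimpleGraph V) (o : V) (brk : V → Ray G o → ℤ)
    (z : ℂ) (μ : Set (Ray G o) → ℂ) (x : V) : ℂ :=
  ∑ᶠ c : ℂ, c * μ {ω : Ray G o | z ^ brk x ω = c}

namespace SimpleGraph

variable {G : SimpleGraph V}

theorem Walk.IsPath.append {u v w : V} {p : G.Walk u v} {q : G.Walk v w} (hp : p.IsPath)
    (hq : q.IsPath) (h : ∀ y ∈ p.support, y ∈ q.support → y = v) : (p.append q).IsPath := by
  rw [Walk.isPath_def, Walk.support_append]
  refine hp.support_nodup.append hq.support_nodup.tail fun y hyp hyq => ?_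
  obtain rfl := h y hyp (List.mem_of_mem_tail hyq)
  have hnodup := hq.support_nodup
  rw [← Walk.cons_tail_support] at hnodup
  exact (List.nodup_cons.mp hnodup).1 hyq

theorem IsTree.length_eq_dist (hG : G.IsTree) {u v : V} {p : G.Walk u v} (hp : p.IsPath) :
    p.length = G.dist u v := by
  obtain ⟨q, hq, hql⟩ := hG.connected.exists_path_of_dist u v
  rw [(hG.existsUnique_path u v).unique hp hq, hql]

theorem IsTree.dist_add_dist_of_mem_support (hG : G.IsTree) {u v y : V} {p : G.Walk u v}
    (hp : p.IsPath) (hy : y ∈ p.support) : G.dist u y + G.dist y v = G.dist u v := by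
  classical
  rw [← hG.length_eq_dist (hp.takeUntil hy), ← hG.length_eq_dist (hp.dropUntil hy),
    ← Walk.length_append, Walk.take_spec, hG.length_eq_dist hp]

theorem IsTree.dist_eq_of_adj_separates (hG : G.IsTree) {o a b x : V} (hab : G.Adj a b)
    (ho : G.dist o b = G.dist o a + 1) (hx : G.dist x a = G.dist x b + 1) :
    G.dist o x = G.dist o a + 1 + G.dist b x := by
  classical
  obtain ⟨p, hp, hpl⟩ := hG.connected.exists_path_of_dist o a
  obtain ⟨r, hr, hrl⟩ := hG.connected.exists_path_of_dist b x
  have hba : G.dist b a = 1 := dist_eq_one_iff_adj.mpr hab.symm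
  have hbp : b ∉ p.support := fun hb => by
    have := hG.dist_add_dist_of_mem_support hp hb
    omega
  have hdisj : ∀ y ∈ (p.concat hab).support, y ∈ r.support → y = b := by
    intro y hy hyr
    rw [Walk.support_concat, List.mem_append, List.mem_singleton] at hy
    rcases hy with hyp | rfl
    · -- seen from `o`, `y` is closer to `a` than to `b`; seen from `x`, closer to `b` than to `a`
      have hpo := hG.dist_add_dist_of_mem_support hp hyp
      have hrx := hG.dist_add_dist_of_mem_support hr hyr
      have h₁ : G.dist o b ≤ G.dist o y + G.dist y b := hG.connected.dist_triangle
      have h₂ : G.dist x a ≤ G.dist x y + G.dist y a := hG.connected.dist_triangle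
      have := dist_comm (G := G) (u := x) (v := b)
      have := dist_comm (G := G) (u := x) (v := y)
      have := dist_comm (G := G) (u := y) (v := b)
      omega
    · rfl
  have hlen := hG.length_eq_dist ((hp.concat hbp hab).append hr hdisj)
  rw [Walk.length_append, Walk.length_concat, hpl, hrl] at hlen
  exact hlen.symm

theorem IsTree.dist_add_one_eq_dist_iff (hG : G.IsTree) {o u v w : V} (huv : G.Adj u v)
    (hv : G.dist o v = G.dist o u + 1) (hw : G.dist o w = G.dist o v) :
    G.dist v w + 1 = G.dist u w ↔ w = v := by
  constructor
  · intro h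
    have := hG.dist_eq_of_adj_separates huv hv (x := w)
      (by rw [dist_comm, dist_comm (u := w)]; omega)
    exact (hG.connected.dist_eq_zero_iff.mp (by omega)).symm
  · rintro rfl
    rw [dist_self, dist_eq_one_iff_adj.mpr huv]

end SimpleGraph

theorem DEdge.adj {G : SimpleGraph V} (e : DEdge G) : G.Adj e.ini e.ter := e.2

namespace Ray

variable {G : SimpleGraph V} {o : V} (ω : Ray G o)

theorem dist_base_apply (n : ℕ) : G.dist o (ω.1 n) = n := ω.2.2.2 n

theorem adj_apply_succ (n : ℕ) : G.Adj (ω.1 n) (ω.1 (n + 1)) := ω.2.2.1 n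

theorem dist_apply_succ (hG : G.IsTree) {x : V} {n : ℕ} (hx : G.dist o x ≤ n) :
    G.dist x (ω.1 (n + 1)) = G.dist x (ω.1 n) + 1 := by
  rcases hG.dist_eq_dist_add_one_of_adj x (ω.adj_apply_succ n) with h | h
  · have := hG.dist_eq_of_adj_separates (ω.adj_apply_succ n)
      (by rw [dist_base_apply, dist_base_apply]) h
    rw [dist_base_apply] at this
    omega
  · exact h

theorem dist_apply_add (hG : G.IsTree) {x : V} {n : ℕ} (hx : G.dist o x ≤ n) (k : ℕ) :
    G.dist x (ω.1 (n + k)) = G.dist x (ω.1 n) + k := by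
  induction k with
  | zero => rfl
  | succ k ih => rw [← add_assoc, ω.dist_apply_succ hG (by omega), ih, add_assoc]

end Ray

section Boundary

variable {G : SimpleGraph V} {o : V}

theorem mem_raysThrough_iff {v : V} {ω : Ray G o} :
    ω ∈ raysThrough G o v ↔ ω.1 (G.dist o v) = v := by
  refine ⟨fun ⟨n, hn⟩ => ?_, fun h => ⟨G.dist o v, h⟩⟩
  rw [← hn, ω.dist_base_apply]

theorem isOpen_raysThrough (v : V) : IsOpen (raysThrough G o v) :=
  TopologicalSpace.isOpen_generateFrom_of_mem ⟨v, rfl⟩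

theorem isOpen_setOf_ray_apply_eq (n : ℕ) (w : V) : IsOpen {ω : Ray G o | ω.1 n = w} := by
  by_cases hw : G.dist o w = n
  · convert isOpen_raysThrough (G := G) (o := o) w using 1
    ext ω
    rw [Set.mem_ofPred_eq, mem_raysThrough_iff, hw]
  · convert isOpen_empty
    ext ω
    simp only [Set.mem_ofPred_eq, Set.mem_empty_iff_false, iff_false]
    rintro rfl
    exact hw (ω.dist_base_apply n)

theorem isClopen_setOf_ray_apply_mem (n : ℕ) (T : Set V) :
    IsClopen {ω : Ray G o | ω.1 n ∈ T} := by
  have hopen (T : Set V) : IsOpen {ω : Ray G o | ω.1 n ∈ T} := by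
    have : {ω : Ray G o | ω.1 n ∈ T} = ⋃ w ∈ T, {ω : Ray G o | ω.1 n = w} := by ext; simp
    exact this ▸ isOpen_biUnion fun w _ => isOpen_setOf_ray_apply_eq n w
  exact ⟨isOpen_compl_iff.mp (hopen Tᶜ), hopen T⟩

theorem isClopen_raysThrough (v : V) : IsClopen (raysThrough G o v) := by
  have : raysThrough G o v = {ω : Ray G o | ω.1 (G.dist o v) ∈ ({v} : Set V)} := by
    ext ω
    exact mem_raysThrough_iff
  exact this ▸ isClopen_setOf_ray_apply_mem _ _

theorem dplus_eq_raysThrough (hG : G.IsTree) {e : DEdge G} (he : PointsAway G o e) :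
    dplus G o e = raysThrough G o e.ter := by
  ext ω
  set n := G.dist o e.ter
  have hn : n = G.dist o e.ini + 1 := he
  have key (k : ℕ) : G.dist e.ter (ω.1 (n + k)) + 1 = G.dist e.ini (ω.1 (n + k)) ↔
      ω.1 n = e.ter := by
    rw [ω.dist_apply_add hG le_rfl, ω.dist_apply_add hG (by omega), add_right_comm,
      add_left_inj]
    exact hG.dist_add_one_eq_dist_iff e.adj he (ω.dist_base_apply n)
  rw [mem_raysThrough_iff]
  constructor
  · rintro ⟨N, hN⟩
    exact (key N).mp (hN (n + N) (by omega))
  · intro h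
    refine ⟨n, fun k hk => ?_⟩
    obtain ⟨j, rfl⟩ := Nat.exists_eq_add_of_le hk
    exact (key j).mpr h

end Boundary

namespace IsHorocycleBracket

variable {G : SimpleGraph V} {o : V} {brk : V → Ray G o → ℤ}

theorem eq_sub_dist (hbrk : IsHorocycleBracket G o brk) (hG : G.IsTree) (ω : Ray G o) {x : V}
    {n : ℕ} (hx : G.dist o x ≤ n) : brk x ω = n - G.dist x (ω.1 n) := by
  obtain ⟨N, hN⟩ := hbrk x ω
  rw [hN (n + N) (by omega), ω.dist_apply_add hG hx]
  push_cast
  ring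

theorem mem_Icc (hbrk : IsHorocycleBracket G o brk) (hG : G.IsTree) (x : V) (ω : Ray G o) :
    brk x ω ∈ Set.Icc (-(G.dist o x : ℤ)) (G.dist o x) := by
  have h : G.dist x (ω.1 (G.dist o x)) ≤ G.dist x o + G.dist o (ω.1 (G.dist o x)) :=
    hG.connected.dist_triangle
  have := dist_comm (G := G) (u := x) (v := o)
  rw [ω.dist_base_apply] at h
  rw [hbrk.eq_sub_dist hG ω le_rfl]
  constructor <;> omega

theorem finite_range (hbrk : IsHorocycleBracket G o brk) (hG : G.IsTree) (x : V) :
    (Set.range (brk x)).Finite :=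
  (Set.finite_Icc _ _).subset (Set.range_subset_iff.mpr (hbrk.mem_Icc hG x))

theorem isClopen_preimage (hbrk : IsHorocycleBracket G o brk) (hG : G.IsTree) (x : V)
    (T : Set ℤ) : IsClopen (brk x ⁻¹' T) := by
  have h : brk x ⁻¹' T = {ω | ω.1 (G.dist o x) ∈ {w | (G.dist o x : ℤ) - G.dist x w ∈ T}} := by
    ext ω
    rw [Set.mem_preimage, hbrk.eq_sub_dist hG ω le_rfl]
    rfl
  exact h ▸ isClopen_setOf_ray_apply_mem _ _

section AwayEdge

variable {e : DEdge G} {ω : Ray G o}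

theorem ter_eq_of_mem_raysThrough (hbrk : IsHorocycleBracket G o brk) (hG : G.IsTree)
    (hω : ω ∈ raysThrough G o e.ter) :
    brk e.ter ω = G.dist o e.ter := by
  rw [hbrk.eq_sub_dist hG ω le_rfl, mem_raysThrough_iff.mp hω, dist_self]
  rfl

theorem ini_eq_of_mem_raysThrough (hbrk : IsHorocycleBracket G o brk) (hG : G.IsTree)
    (he : PointsAway G o e) (hω : ω ∈ raysThrough G o e.ter) :
    brk e.ini ω = G.dist o e.ini := by
  have hn : G.dist o e.ter = G.dist o e.ini + 1 := he
  rw [hbrk.eq_sub_dist hG ω (by omega : G.dist o e.ini ≤ G.dist o e.ter),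
    mem_raysThrough_iff.mp hω, dist_eq_one_iff_adj.mpr e.adj, hn]
  push_cast
  ring

theorem ter_eq_ini_sub_one_of_notMem (hbrk : IsHorocycleBracket G o brk) (hG : G.IsTree)
    (he : PointsAway G o e) (hω : ω ∉ raysThrough G o e.ter) :
    brk e.ter ω = brk e.ini ω - 1 := by
  have hn : G.dist o e.ter = G.dist o e.ini + 1 := he
  have hne := (hG.dist_add_one_eq_dist_iff e.adj he (ω.dist_base_apply _)).not.mpr
    (mt mem_raysThrough_iff.mpr hω)
  have hdist := hG.dist_eq_dist_add_one_of_adj (ω.1 (G.dist o e.ter)) e.adj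
  have := dist_comm (G := G) (u := e.ini) (v := ω.1 (G.dist o e.ter))
  have := dist_comm (G := G) (u := e.ter) (v := ω.1 (G.dist o e.ter))
  rw [hbrk.eq_sub_dist hG ω le_rfl,
    hbrk.eq_sub_dist hG ω (by omega : G.dist o e.ini ≤ G.dist o e.ter)]
  omega

end AwayEdge

end IsHorocycleBracket

section FinitelyAdditive

variable {Z : Type*} {μ : Set Z → ℂ} {g : Z → ℂ} {A : Set Z}

/-- `∫_A g dμ`, meaningful when `g` takes finitely many values on clopen level sets
(otherwise the `finsum` may have infinite support and is `0`). -/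
noncomputable def faSetIntegral (μ : Set Z → ℂ) (g : Z → ℂ) (A : Set Z) : ℂ :=
  ∑ᶠ c : ℂ, c * μ ({x | g x = c} ∩ A)

theorem IsFAMeasure.inter_add_inter_compl [TopologicalSpace Z] (hμ : IsFAMeasure μ)
    {U S : Set Z} (hU : IsClopen U) (hS : IsClopen S) : μ (U ∩ S) + μ (U ∩ Sᶜ) = μ U := by
  have h := hμ.2 _ _ (hU.inter hS) (hU.inter hS.compl)
  have hdisj : U ∩ S ∩ (U ∩ Sᶜ) = ∅ := by
    rw [Set.inter_inter_inter_comm, Set.inter_compl_self, Set.inter_empty]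
  rwa [Set.inter_union_compl, hdisj, hμ.1, add_zero, eq_comm] at h

theorem support_mul_measure_subset_range (hμ : μ ∅ = 0) (g : Z → ℂ) (A : Set Z) :
    (Function.support fun c => c * μ ({x | g x = c} ∩ A)) ⊆ Set.range g := by
  intro c hc
  by_contra hg
  have h : {x | g x = c} ∩ A = ∅ :=
    Set.eq_empty_of_forall_notMem fun x hx => hg ⟨x, hx.1⟩
  rw [Function.mem_support, h, hμ, mul_zero] at hc
  exact hc rfl

theorem IsFAMeasure.finsum_eq_faSetIntegral_add_compl [TopologicalSpace Z] (hμ : IsFAMeasure μ)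
    (hg : (Set.range g).Finite) (hgc : ∀ c, IsClopen {x | g x = c}) {S : Set Z}
    (hS : IsClopen S) :
    ∑ᶠ c : ℂ, c * μ {x | g x = c} = faSetIntegral μ g S + faSetIntegral μ g Sᶜ := by
  rw [faSetIntegral, faSetIntegral,
    ← finsum_add_distrib (hg.subset (support_mul_measure_subset_range hμ.1 g S))
      (hg.subset (support_mul_measure_subset_range hμ.1 g Sᶜ))]
  refine finsum_congr fun c => ?_
  rw [← mul_add, hμ.inter_add_inter_compl (hgc c) hS]

theorem faSetIntegral_congr {g' : Z → ℂ} (h : Set.EqOn g g' A) :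
    faSetIntegral μ g A = faSetIntegral μ g' A := by
  refine finsum_congr fun c => ?_
  congr 2
  ext x
  simp only [Set.mem_inter_iff, Set.mem_ofPred_eq]
  exact and_congr_left fun hx => by rw [h hx]

theorem faSetIntegral_eq_mul (hμ : μ ∅ = 0) {c : ℂ} (h : ∀ x ∈ A, g x = c) :
    faSetIntegral μ g A = c * μ A := by
  rw [faSetIntegral, finsum_eq_single _ c]
  · rw [Set.inter_eq_right.mpr (show A ⊆ {x | g x = c} from h)]
  · intro d hd
    have hempty : {x | g x = d} ∩ A = ∅ :=
      Set.eq_empty_of_forall_notMem fun x hx => hd (hx.1 ▸ h x hx.2)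
    rw [hempty, hμ, mul_zero]

theorem faSetIntegral_const_mul {a : ℂ} (ha : a ≠ 0) :
    faSetIntegral μ (fun x => a * g x) A = a * faSetIntegral μ g A := by
  rw [faSetIntegral, faSetIntegral, mul_finsum, ← finsum_comp_equiv (Equiv.mulLeft₀ a ha)]
  refine finsum_congr fun c => ?_
  simp only [Equiv.mulLeft₀_apply, mul_right_inj' ha, mul_assoc]

end FinitelyAdditive

theorem stmt_13_general {V : Type*} (G : SimpleGraph V) (htree : G.IsTree)
    (o : V) (brk : V → Ray G o → ℤ) (hbrk : IsHorocycleBracket G o brk)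
    (z : ℂ) (hz0 : z ^ 2 ≠ 0)
    (μ : Set (Ray G o) → ℂ) (hμ : IsFAMeasure μ) :
    ∀ e : DEdge G, PointsAway G o e →
      z * poisson G o brk z μ e.ter - poisson G o brk z μ e.ini
        = (z ^ 2 - 1) * z ^ G.dist o e.ini * μ (dplus G o e) := by
  intro e he
  have hz : z ≠ 0 := ne_zero_pow two_ne_zero hz0
  set S := raysThrough G o e.ter
  have hsplit (x : V) : poisson G o brk z μ x =
      faSetIntegral μ (z ^ brk x ·) S + faSetIntegral μ (z ^ brk x ·) Sᶜ :=
    hμ.finsum_eq_faSetIntegral_add_compl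
      (Set.range_comp (z ^ ·) (brk x) ▸ (hbrk.finite_range htree x).image _)
      (fun c => hbrk.isClopen_preimage htree x {k | z ^ k = c}) (isClopen_raysThrough _)
  have hter : faSetIntegral μ (z ^ brk e.ter ·) S = z ^ G.dist o e.ter * μ S :=
    faSetIntegral_eq_mul hμ.1 fun ω hω => by
      rw [hbrk.ter_eq_of_mem_raysThrough htree hω, zpow_natCast]
  have hini : faSetIntegral μ (z ^ brk e.ini ·) S = z ^ G.dist o e.ini * μ S :=
    faSetIntegral_eq_mul hμ.1 fun ω hω => by
      rw [hbrk.ini_eq_of_mem_raysThrough htree he hω, zpow_natCast]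
  have hoff : Set.EqOn (z ^ brk e.ter ·) (z⁻¹ * z ^ brk e.ini ·) Sᶜ := fun ω hω => by
    simp only [hbrk.ter_eq_ini_sub_one_of_notMem htree he hω, zpow_sub_one₀ hz, mul_comm]
  rw [hsplit, hsplit, hter, hini, faSetIntegral_congr hoff,
    faSetIntegral_const_mul (inv_ne_zero hz), dplus_eq_raysThrough htree he,
    show G.dist o e.ter = G.dist o e.ini + 1 from he]
  field_simp
  ring

/-- For `z² ∉ {0,1}`, a finitely additive measure `μ` on `Ω`, and
`f = P_z(μ)`: for every directed edge `e⃗` pointing away from `o`,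
`z·f(τ(e⃗)) - f(ι(e⃗)) = (z²-1) z^{d(o,ι(e⃗))} μ(∂₊ e⃗)`. -/
theorem stmt_13 {V : Type*} (G : SimpleGraph V) (htree : G.IsTree) [G.LocallyFinite]
    (o : V) (brk : V → Ray G o → ℤ) (hbrk : IsHorocycleBracket G o brk)
    (z : ℂ) (hz0 : z ^ 2 ≠ 0) (hz1 : z ^ 2 ≠ 1)
    (μ : Set (Ray G o) → ℂ) (hμ : IsFAMeasure μ) :
    ∀ e : DEdge G, PointsAway G o e →
      z * poisson G o brk z μ e.ter - poisson G o brk z μ e.ini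
        = (z ^ 2 - 1) * z ^ G.dist o e.ini * μ (dplus G o e) :=
  stmt_13_general G htree o brk hbrk z hz0 μ hμ
end

section
/- Assume z² ∉ {0,1}. Let f : X → ℂ and μ⃗ : E⃗_o → ℂ satisfy z f(τ(e⃗)) − f(ι(e⃗)) = (z²−1) z^{d(o,ι(e⃗))} μ⃗(e⃗) for all e⃗ ∈ E⃗_o. Then μ⃗ satisfies the compatibility conditions μ⃗(e⃗) = Σ_{ι(g⃗)=τ(e⃗)} μ⃗(g⃗) for all e⃗ ∈ E⃗_o if and only if f satisfies Σ_{ι(e⃗)=v} f(τ(e⃗)) = (z + q_v z^{-1}) f(v) for all vertices v ≠ o. -/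
open SimpleGraph

variable {V : Type*}

/-! At a vertex `v ≠ o` with parent `u`, the edges of `E⃗_o` leaving `v` go to the children of
`v`, and the neighbours of `v` are `u` together with these children. Multiplying the compatibility
condition at the edge `(u, v)` by `(z² - 1) z^{d(o,v)} ≠ 0` and substituting the relation between
`f` and `μ⃗` on every edge involved turns it into
`z (z f(v) - f(u)) = z Σ_{children} f - q_v f(v)`, which is the eigenvalue equation at `v`. -/

open Finset

namespace SimpleGraph

variable {G : SimpleGraph V} {o u u' v : V}

lemma Reachable.exists_adj_dist_eq_add_one (hv : G.Reachable o v) (hne : o ≠ v) :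
    ∃ u, G.Adj u v ∧ G.dist o v = G.dist o u + 1 := by
  obtain ⟨p, hp⟩ := hv.symm.exists_walk_length_eq_dist
  have hnil : ¬p.Nil := Walk.not_nil_of_ne hne.symm
  have hadj : G.Adj p.snd v := (Walk.adj_snd hnil).symm
  refine ⟨p.snd, hadj, le_antisymm ?_ ?_⟩
  · simpa [dist_eq_one_iff_adj.2 hadj] using hadj.reachable.dist_triangle_right o
  · calc G.dist o p.snd + 1 ≤ p.tail.length + 1 := by
          rw [dist_comm]; exact Nat.succ_le_succ (dist_le _)
      _ = G.dist o v := by rw [p.length_tail_add_one hnil, hp, dist_comm]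

lemma IsAcyclic.eq_of_adj_of_dist_eq_add_one (hG : G.IsAcyclic) (hu : G.Reachable o u)
    (hu' : G.Reachable o u') (huv : G.Adj u v) (hu'v : G.Adj u' v)
    (hd : G.dist o v = G.dist o u + 1) (hd' : G.dist o v = G.dist o u' + 1) : u = u' := by
  obtain ⟨p, hp⟩ := hu.exists_walk_length_eq_dist
  obtain ⟨p', hp'⟩ := hu'.exists_walk_length_eq_dist
  have hpath : (p.concat huv).IsPath :=
    (p.concat huv).isPath_of_length_eq_dist (by simp [hp, hd])
  have hpath' : (p'.concat hu'v).IsPath :=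
    (p'.concat hu'v).isPath_of_length_eq_dist (by simp [hp', hd'])
  have := congrArg Subtype.val ((hG.subsingleton_path o v).elim ⟨_, hpath⟩ ⟨_, hpath'⟩)
  exact (Walk.concat_inj this).1

end SimpleGraph

open Classical in
noncomputable def childFinset (G : SimpleGraph V) [G.LocallyFinite] (o v : V) : Finset V :=
  {y ∈ G.neighborFinset v | G.dist o y = G.dist o v + 1}

section EdgeSums

variable {G : SimpleGraph V} {o u v : V}

lemma edgeSumAway_congr {F F' : DEdgeAway G o → ℂ}
    (h : ∀ e : DEdgeAway G o, e.1.ini = v → F e = F' e) :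
    edgeSumAway G o v F = edgeSumAway G o v F' :=
  finsum_congr fun e ↦ finsum_congr (h e)

variable [G.LocallyFinite]

lemma mem_childFinset {y : V} :
    y ∈ childFinset G o v ↔ G.Adj v y ∧ G.dist o y = G.dist o v + 1 := by
  simp [childFinset]

lemma parent_notMem_childFinset (hd : G.dist o v = G.dist o u + 1) : u ∉ childFinset G o v := by
  rw [mem_childFinset]
  lia

lemma SimpleGraph.IsTree.neighborFinset_eq_insert_childFinset [DecidableEq V] (hG : G.IsTree)
    (huv : G.Adj u v) (hd : G.dist o v = G.dist o u + 1) :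
    G.neighborFinset v = insert u (childFinset G o v) := by
  ext y
  rw [mem_insert, mem_childFinset, mem_neighborFinset]
  refine ⟨fun hvy ↦ ?_, by rintro (rfl | ⟨hvy, -⟩) <;> [exact huv.symm; exact hvy]⟩
  refine (hG.dist_eq_dist_add_one_of_adj o hvy).imp (fun hd' ↦ ?_) (⟨hvy, ·⟩)
  exact hG.isAcyclic.eq_of_adj_of_dist_eq_add_one (hG.connected o y) (hG.connected o u)
    hvy.symm huv hd' hd

lemma SimpleGraph.IsTree.degree_eq_card_childFinset_add_one (hG : G.IsTree) (huv : G.Adj u v)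
    (hd : G.dist o v = G.dist o u + 1) : G.degree v = #(childFinset G o v) + 1 := by
  classical
  rw [← card_neighborFinset_eq_degree, hG.neighborFinset_eq_insert_childFinset huv hd,
    card_insert_of_notMem (parent_notMem_childFinset hd)]

variable (o v) in
lemma finite_setOf_ini_eq : {e : DEdgeAway G o | e.1.ini = v}.Finite := by
  refine Set.Finite.of_finite_image (f := fun e ↦ e.1.ter)
    ((G.neighborSet v).toFinite.subset ?_) ?_
  · rintro y ⟨e, rfl, rfl⟩
    exact e.1.2
  · rintro e (rfl : e.1.ini = v) e' he' hter
    exact Subtype.ext <| Subtype.ext <| Prod.ext he'.symm hter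

lemma edgeSumAway_eq_sum (F : DEdgeAway G o → ℂ) :
    edgeSumAway G o v F = ∑ e ∈ (finite_setOf_ini_eq o v).toFinset, F e :=
  finsum_mem_eq_finite_toFinset_sum F (finite_setOf_ini_eq o v)

lemma mul_edgeSumAway (c : ℂ) (F : DEdgeAway G o → ℂ) :
    c * edgeSumAway G o v F = edgeSumAway G o v (fun e ↦ c * F e) := by
  simp only [edgeSumAway_eq_sum, mul_sum]

lemma edgeSumAway_comp_ter (g : V → ℂ) :
    edgeSumAway G o v (fun e ↦ g e.1.ter) = ∑ y ∈ childFinset G o v, g y := by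
  rw [edgeSumAway_eq_sum]
  refine sum_bij' (fun e _ ↦ e.1.ter)
    (fun y hy ↦ ⟨⟨(v, y), (mem_childFinset.1 hy).1⟩, (mem_childFinset.1 hy).2⟩)
    ?_ ?_ ?_ ?_ (fun _ _ ↦ rfl)
  · intro e he
    have he : e.1.ini = v := by simpa using he
    exact mem_childFinset.2 ⟨he ▸ e.1.2, he ▸ e.2⟩
  · exact fun y _ ↦ (Set.Finite.mem_toFinset _).2 rfl
  · intro e he
    have he : e.1.ini = v := by simpa using he
    exact Subtype.ext <| Subtype.ext <| Prod.ext he.symm rfl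
  · exact fun _ _ ↦ rfl

end EdgeSums

section Compatibility

variable {G : SimpleGraph V} [G.LocallyFinite] {o : V} {z : ℂ} {f : V → ℂ}
  {m : DEdgeAway G o → ℂ}

lemma mul_edgeSumAway_eq_sum_childFinset
    (hbeta : ∀ e : DEdgeAway G o,
      z * f e.1.ter - f e.1.ini = (z ^ 2 - 1) * z ^ G.dist o e.1.ini * m e) (v : V) :
    (z ^ 2 - 1) * z ^ G.dist o v * edgeSumAway G o v m
      = z * ∑ y ∈ childFinset G o v, f y - #(childFinset G o v) * f v := by
  rw [mul_edgeSumAway, edgeSumAway_congr (F' := fun e ↦ z * f e.1.ter - f v)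
    (fun e he ↦ he ▸ (hbeta e).symm), edgeSumAway_comp_ter (fun y ↦ z * f y - f v),
    sum_sub_distrib, ← mul_sum, sum_const, nsmul_eq_mul]

lemma eq_edgeSumAway_ter_iff (hG : G.IsTree) (hz : z ≠ 0) (hz1 : z ^ 2 ≠ 1)
    (hbeta : ∀ e : DEdgeAway G o,
      z * f e.1.ter - f e.1.ini = (z ^ 2 - 1) * z ^ G.dist o e.1.ini * m e)
    (e : DEdgeAway G o) :
    m e = edgeSumAway G o e.1.ter m ↔
      ∑ y ∈ G.neighborFinset e.1.ter, f y
        = (z + ((G.degree e.1.ter : ℂ) - 1) * z⁻¹) * f e.1.ter := by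
  classical
  have huv : G.Adj e.1.ini e.1.ter := e.1.2
  have hd : G.dist o e.1.ter = G.dist o e.1.ini + 1 := e.2
  have hparent := hbeta e
  have hK : (z ^ 2 - 1) * z ^ G.dist o e.1.ter ≠ 0 :=
    mul_ne_zero (sub_ne_zero.2 hz1) (pow_ne_zero _ hz)
  rw [← mul_right_inj' hK, mul_edgeSumAway_eq_sum_childFinset hbeta,
    hG.neighborFinset_eq_insert_childFinset huv hd, sum_insert (parent_notMem_childFinset hd),
    hG.degree_eq_card_childFinset_add_one huv hd, hd]
  push_cast
  constructor <;> intro h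
  · field_simp
    linear_combination -h - z * hparent
  · field_simp at h
    linear_combination -h - z * hparent

end Compatibility

/-- Assume `z² ∉ {0,1}` and let `f : X → ℂ`, `μ⃗ : E⃗_o → ℂ` satisfy
`z f(τ(e⃗)) - f(ι(e⃗)) = (z²-1) z^{d(o,ι(e⃗))} μ⃗(e⃗)` for all `e⃗ ∈ E⃗_o`.
Then `μ⃗` satisfies the compatibility conditions
`μ⃗(e⃗) = Σ_{ι(g⃗)=τ(e⃗)} μ⃗(g⃗)` iff
`Σ_{ι(e⃗)=v} f(τ(e⃗)) = (z + q_v z⁻¹) f(v)` for all `v ≠ o`. -/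
theorem stmt_14 {V : Type*} (G : SimpleGraph V) (htree : G.IsTree) [G.LocallyFinite]
    (o : V) (z : ℂ) (hz0 : z ^ 2 ≠ 0) (hz1 : z ^ 2 ≠ 1)
    (f : V → ℂ) (m : DEdgeAway G o → ℂ)
    (hbeta : ∀ e : DEdgeAway G o,
      z * f e.1.ter - f e.1.ini = (z ^ 2 - 1) * z ^ G.dist o e.1.ini * m e) :
    (∀ e : DEdgeAway G o, m e = edgeSumAway G o e.1.ter m) ↔
    (∀ v : V, v ≠ o →
      ∑ y ∈ G.neighborFinset v, f y
        = (z + ((G.degree v : ℂ) - 1) * z⁻¹) * f v) := by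
  have hz : z ≠ 0 := by rintro rfl; simp at hz0
  refine ⟨fun hcompat v hv ↦ ?_, fun hf e ↦ ?_⟩
  · obtain ⟨u, huv, hd⟩ := (htree.connected o v).exists_adj_dist_eq_add_one hv.symm
    exact (eq_edgeSumAway_ter_iff htree hz hz1 hbeta ⟨⟨(u, v), huv⟩, hd⟩).1 (hcompat _)
  · have hter : e.1.ter ≠ o := by
      intro h
      simpa [PointsAway, h] using e.2
    exact (eq_edgeSumAway_ter_iff htree hz hz1 hbeta e).2 (hf _ hter)
end
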